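/- arXiv:2311.18277 — 4 statements merged into one kernel-verified Lean document; each statement's English description precedes it below -/
import Mathlib

section
/- (Hellinger error of Gaussian smoothing, quantitative form of Lemma 1 in the appendix.) Let g₀ be an absolutely continuous probability density on ℝ whose weak derivative g₀' is Lebesgue integrable. Let ĝ be any probability density on ℝ, let λ > 0, and define the Gaussian smoothing ĝ_λ(x) = λ⁻¹ ∫ ĝ(t) φ((x−t)/λ) dt, where φ is the standard Gaussian density. Then H(ĝ_λ, g₀)² ≤ √2 · H(ĝ, g₀) + 2√(2/π) · λ · ∫ |g₀'(z)| dz. -/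
open MeasureTheory

noncomputable section

/-- `f` is a probability density on `ℝ`. -/
def IsProbDensity (f : ℝ → ℝ) : Prop :=
  (∀ x, 0 ≤ f x) ∧ Integrable f ∧ ∫ x, f x = 1

/-- Hellinger distance between densities: `H(f,g)² = ½∫(√f − √g)²`. -/
def hellingerDist (f g : ℝ → ℝ) : ℝ :=
  Real.sqrt ((1 / 2) * ∫ x, (Real.sqrt (f x) - Real.sqrt (g x)) ^ 2)

/-- The standard Gaussian density `φ(x) = (2π)^{-1/2} e^{-x²/2}`. -/
def gaussPdf (x : ℝ) : ℝ := (Real.sqrt (2 * Real.pi))⁻¹ * Real.exp (-(x ^ 2) / 2)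

/-!
Le Cam's inequalities `H² ≤ ½‖f - g‖₁ ≤ √2 H` reduce the claim to an `L¹` bound. Since
`ĝ_λ - g₀ = ∫ φ_λ(u) (ĝ(· - u) - g₀) du`, Minkowski's integral inequality gives
`‖ĝ_λ - g₀‖₁ ≤ ‖ĝ - g₀‖₁ + ∫ φ_λ(u) ‖g₀(· - u) - g₀‖₁ du`; absolute continuity bounds
`‖g₀(· - u) - g₀‖₁ ≤ |u| ‖g₀'‖₁`, and the first absolute moment of `φ_λ` is `λ √(2/π)`.
-/

open Real Set ProbabilityTheory Interval

lemma gaussPdf_eq_gaussianPDFReal : gaussPdf = gaussianPDFReal 0 1 := by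
  ext x
  simp [gaussPdf, gaussianPDFReal]

lemma integral_Ioi_mul_exp_neg_mul_sq {b : ℝ} (hb : 0 < b) :
    ∫ v in Ioi (0 : ℝ), v * exp (-b * v ^ 2) = (2 * b)⁻¹ := by
  have h := integral_rpow_mul_exp_neg_mul_rpow (p := 2) (q := 1) two_pos (by norm_num) hb
  norm_num [rpow_neg_one] at h
  rw [mul_inv, mul_comm, inv_eq_one_div 2, ← h]
  refine setIntegral_congr_fun measurableSet_Ioi fun v _ => ?_
  ring_nf

lemma integral_abs_mul_gaussPdf : ∫ v, |v| * gaussPdf v = √(2 / π) := by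
  have h := integral_comp_abs (f := fun v => v * gaussPdf v)
  have hexp : ∀ v : ℝ, exp (-v ^ 2 / 2) = exp (-(1 / 2) * v ^ 2) := fun v => by ring_nf
  simp only [gaussPdf, sq_abs, hexp, mul_left_comm _ (√(2 * π))⁻¹, integral_const_mul,
    integral_Ioi_mul_exp_neg_mul_sq one_half_pos] at h
  simp only [gaussPdf, hexp, mul_left_comm _ (√(2 * π))⁻¹, integral_const_mul, h]
  rw [sqrt_div' _ pi_pos.le, sqrt_mul zero_le_two]
  have h2 : √2 * √2 = 2 := mul_self_sqrt zero_le_two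
  have hπ : 0 < √π := sqrt_pos.2 pi_pos
  field_simp
  linarith

lemma integrable_abs_mul_gaussPdf : Integrable fun v => |v| * gaussPdf v := by
  refine ((integrable_mul_exp_neg_mul_sq (b := 1 / 2) (by norm_num)).norm.const_mul
    (√(2 * π))⁻¹).congr (ae_of_all _ fun v => ?_)
  simp only [gaussPdf, norm_mul, norm_eq_abs, abs_exp]
  ring_nf

-- The paper's `φ_λ`, i.e. the density of `N(0, λ²)`.
def gaussKernel (l u : ℝ) : ℝ := l⁻¹ * gaussPdf (u / l)

lemma gaussKernel_nonneg {l : ℝ} (hl : 0 ≤ l) (u : ℝ) : 0 ≤ gaussKernel l u := by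
  unfold gaussKernel gaussPdf
  positivity

lemma integrable_gaussKernel {l : ℝ} (hl : l ≠ 0) : Integrable (gaussKernel l) := by
  unfold gaussKernel
  rw [gaussPdf_eq_gaussianPDFReal]
  exact ((integrable_gaussianPDFReal 0 1).comp_div hl).const_mul l⁻¹

lemma integral_gaussKernel {l : ℝ} (hl : 0 < l) : ∫ u, gaussKernel l u = 1 := by
  simp only [gaussKernel]
  rw [integral_const_mul, Measure.integral_comp_div (gaussPdf ·) l, gaussPdf_eq_gaussianPDFReal,
    integral_gaussianPDFReal_eq_one 0 one_ne_zero, smul_eq_mul, mul_one, abs_of_pos hl,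
    inv_mul_cancel₀ hl.ne']

lemma abs_mul_gaussKernel {l : ℝ} (hl : 0 < l) (u : ℝ) :
    |u| * gaussKernel l u = |u / l| * gaussPdf (u / l) := by
  rw [gaussKernel, abs_div, abs_of_pos hl]
  ring

lemma inv_mul_integral_mul_gaussPdf_eq_integral_gaussKernel_mul (f : ℝ → ℝ) (l x : ℝ) :
    l⁻¹ * ∫ t, f t * gaussPdf ((x - t) / l) = ∫ u, gaussKernel l u * f (x - u) := by
  rw [← integral_const_mul,
    ← integral_sub_left_eq_self (fun u => gaussKernel l u * f (x - u)) volume x]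
  simp only [gaussKernel, sub_sub_cancel]
  congr 1
  funext t
  ring

lemma integrable_abs_mul_gaussKernel {l : ℝ} (hl : 0 < l) :
    Integrable fun u => |u| * gaussKernel l u := by
  simp only [abs_mul_gaussKernel hl]
  exact integrable_abs_mul_gaussPdf.comp_div hl.ne'

lemma integral_abs_mul_gaussKernel {l : ℝ} (hl : 0 < l) :
    ∫ u, |u| * gaussKernel l u = l * √(2 / π) := by
  simp only [abs_mul_gaussKernel hl]
  rw [Measure.integral_comp_div (fun v => |v| * gaussPdf v) l, integral_abs_mul_gaussPdf,
    smul_eq_mul, abs_of_pos hl]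

section Hellinger

variable {α : Type*} [MeasurableSpace α] {μ : Measure α}

lemma integral_mul_le_sqrt_mul_sqrt {f g : α → ℝ} (hf0 : 0 ≤ᵐ[μ] f) (hg0 : 0 ≤ᵐ[μ] g)
    (hf : MemLp f 2 μ) (hg : MemLp g 2 μ) :
    ∫ x, f x * g x ∂μ ≤ √(∫ x, f x ^ 2 ∂μ) * √(∫ x, g x ^ 2 ∂μ) := by
  have h := integral_mul_le_Lp_mul_Lq_of_nonneg HolderConjugate.two_two hf0 hg0
    (by simpa using hf) (by simpa using hg)
  simpa only [rpow_two, ← sqrt_eq_rpow] using h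

lemma memLp_two_sqrt {f : α → ℝ} (hf0 : 0 ≤ᵐ[μ] f) (hf : Integrable f μ) :
    MemLp (fun x => √(f x)) 2 μ := by
  refine (memLp_two_iff_integrable_sq (continuous_sqrt.comp_aestronglyMeasurable hf.1)).2 ?_
  exact hf.congr (hf0.mono fun x hx => (sq_sqrt hx).symm)

lemma abs_sub_eq_abs_sqrt_sub_mul_sqrt_add {p q : ℝ} (hp : 0 ≤ p) (hq : 0 ≤ q) :
    |p - q| = |√p - √q| * (√p + √q) := by
  rw [← abs_of_nonneg (add_nonneg (sqrt_nonneg p) (sqrt_nonneg q)), ← abs_mul]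
  congr 1
  linear_combination sq_sqrt hq - sq_sqrt hp

lemma sq_sqrt_sub_sqrt_le_abs_sub {p q : ℝ} (hp : 0 ≤ p) (hq : 0 ≤ q) :
    (√p - √q) ^ 2 ≤ |p - q| := by
  rw [abs_sub_eq_abs_sqrt_sub_mul_sqrt_add hp hq, sq, ← abs_mul_abs_self]
  gcongr
  exact abs_sub_le_iff.2 ⟨by linarith [sqrt_nonneg q], by linarith [sqrt_nonneg p]⟩

lemma integral_abs_sub_le_two_mul_sqrt_integral_sq_sqrt_sub {f g : α → ℝ}
    (hf0 : ∀ x, 0 ≤ f x) (hg0 : ∀ x, 0 ≤ g x) (hf : Integrable f μ) (hg : Integrable g μ)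
    (hf1 : ∫ x, f x ∂μ = 1) (hg1 : ∫ x, g x ∂μ = 1) :
    ∫ x, |f x - g x| ∂μ ≤ 2 * √(∫ x, (√(f x) - √(g x)) ^ 2 ∂μ) := by
  have hsf := memLp_two_sqrt (ae_of_all μ hf0) hf
  have hsg := memLp_two_sqrt (ae_of_all μ hg0) hg
  have hsum : ∫ x, (√(f x) + √(g x)) ^ 2 ∂μ ≤ 4 := calc
    _ ≤ ∫ x, 2 * (f x + g x) ∂μ := by
      refine integral_mono (hsf.add hsg).integrable_sq ((hf.add hg).const_mul 2) fun x => ?_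
      nlinarith [sq_sqrt (hf0 x), sq_sqrt (hg0 x), sq_nonneg (√(f x) - √(g x))]
    _ = 4 := by rw [integral_const_mul, integral_add hf hg, hf1, hg1]; norm_num
  calc ∫ x, |f x - g x| ∂μ = ∫ x, |√(f x) - √(g x)| * (√(f x) + √(g x)) ∂μ := by
        simp only [abs_sub_eq_abs_sqrt_sub_mul_sqrt_add (hf0 _) (hg0 _)]
    _ ≤ √(∫ x, |√(f x) - √(g x)| ^ 2 ∂μ) * √(∫ x, (√(f x) + √(g x)) ^ 2 ∂μ) :=
        integral_mul_le_sqrt_mul_sqrt (ae_of_all μ fun x => abs_nonneg _)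
          (ae_of_all μ fun x => by positivity) (hsf.sub hsg).abs (hsf.add hsg)
    _ ≤ √(∫ x, (√(f x) - √(g x)) ^ 2 ∂μ) * √4 := by
        simp only [sq_abs]
        gcongr
    _ = 2 * √(∫ x, (√(f x) - √(g x)) ^ 2 ∂μ) := by
        rw [show (4 : ℝ) = 2 ^ 2 by norm_num, sqrt_sq zero_le_two, mul_comm]

end Hellinger

lemma sq_hellingerDist (f g : ℝ → ℝ) :
    hellingerDist f g ^ 2 = 1 / 2 * ∫ x, (√(f x) - √(g x)) ^ 2 :=
  sq_sqrt (mul_nonneg (by norm_num) (integral_nonneg fun x => sq_nonneg _))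

lemma sq_hellingerDist_le_half_integral_abs_sub {f g : ℝ → ℝ} (hf0 : ∀ x, 0 ≤ f x)
    (hg0 : ∀ x, 0 ≤ g x) (hf : Integrable f) (hg : Integrable g) :
    hellingerDist f g ^ 2 ≤ 1 / 2 * ∫ x, |f x - g x| := by
  rw [sq_hellingerDist]
  refine mul_le_mul_of_nonneg_left ?_ (by norm_num)
  exact integral_mono_of_nonneg (ae_of_all _ fun x => sq_nonneg _) (hf.sub hg).abs
    (ae_of_all _ fun x => sq_sqrt_sub_sqrt_le_abs_sub (hf0 x) (hg0 x))

lemma integral_abs_sub_le_two_sqrt_two_mul_hellingerDist {f g : ℝ → ℝ} (hf : IsProbDensity f)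
    (hg : IsProbDensity g) : ∫ x, |f x - g x| ≤ 2 * √2 * hellingerDist f g := by
  have h := integral_abs_sub_le_two_mul_sqrt_integral_sq_sqrt_sub hf.1 hg.1 hf.2.1 hg.2.1
    hf.2.2 hg.2.2
  rwa [hellingerDist, mul_assoc, ← sqrt_mul zero_le_two, ← mul_assoc,
    mul_one_div_cancel two_ne_zero, one_mul]

lemma integral_abs_comp_sub_sub_le {g g' : ℝ → ℝ} (hAC : ∀ a b, g b - g a = ∫ x in a..b, g' x)
    (hg' : Integrable g') (u : ℝ) :
    ∫ x, |g (x - u) - g x| ≤ |u| * ∫ x, |g' x| := by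
  have hpt : ∀ x, |g (x - u) - g x| ≤ ∫ w in Ι 0 u, |g' (x - w)| := fun x => by
    have h : g x - g (x - u) = ∫ w in (0 : ℝ)..u, g' (x - w) := by
      rw [intervalIntegral.integral_comp_sub_left g', sub_zero, hAC]
    rw [abs_sub_comm, h]
    simpa only [norm_eq_abs] using intervalIntegral.norm_integral_le_integral_norm_uIoc
      (f := fun w => g' (x - w)) (μ := volume)
  have hvol : volume (Ι 0 u) ≠ ⊤ := by simp [Real.volume_uIoc]
  have hF : Integrable (fun p : ℝ × ℝ => |g' (p.1 - p.2)|)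
      (volume.prod (volume.restrict (Ι 0 u))) := by
    have h1 : Integrable (fun _ : ℝ => (1 : ℝ)) (volume.restrict (Ι 0 u)) :=
      integrableOn_const hvol
    simpa using h1.convolution_integrand (ContinuousLinearMap.mul ℝ ℝ) hg'.abs
  calc ∫ x, |g (x - u) - g x| ≤ ∫ x, ∫ w in Ι 0 u, |g' (x - w)| :=
        integral_mono_of_nonneg (ae_of_all _ fun _ => abs_nonneg _) hF.integral_prod_left
          (ae_of_all _ hpt)
    _ = ∫ w in Ι 0 u, ∫ x, |g' (x - w)| := integral_integral_swap hF
    _ = |u| * ∫ x, |g' x| := by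
        simp only [integral_sub_right_eq_self (fun x => |g' x|), setIntegral_const, smul_eq_mul,
          measureReal_def, Real.volume_uIoc, sub_zero, ENNReal.toReal_ofReal (abs_nonneg u)]

lemma integral_abs_comp_sub_sub_le_add {f g g' : ℝ → ℝ}
    (hAC : ∀ a b, g b - g a = ∫ x in a..b, g' x) (hf : Integrable f) (hg : Integrable g)
    (hg' : Integrable g') (u : ℝ) :
    ∫ x, |f (x - u) - g x| ≤ (∫ x, |f x - g x|) + |u| * ∫ x, |g' x| := by
  have hfg : Integrable fun x => |f (x - u) - g (x - u)| := (hf.sub hg).abs.comp_sub_right u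
  have hgg : Integrable fun x => |g (x - u) - g x| := ((hg.comp_sub_right u).sub hg).abs
  calc ∫ x, |f (x - u) - g x| ≤ ∫ x, (|f (x - u) - g (x - u)| + |g (x - u) - g x|) :=
        integral_mono_of_nonneg (ae_of_all _ fun _ => abs_nonneg _) (hfg.add hgg)
          (ae_of_all _ fun x => abs_sub_le _ _ _)
    _ = (∫ x, |f x - g x|) + ∫ x, |g (x - u) - g x| := by
        rw [integral_add hfg hgg, integral_sub_right_eq_self (fun x => |f x - g x|)]
    _ ≤ (∫ x, |f x - g x|) + |u| * ∫ x, |g' x| :=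
        add_le_add le_rfl (integral_abs_comp_sub_sub_le hAC hg' u)

section Smoothing

variable {K f g : ℝ → ℝ}

lemma integral_abs_integral_mul_comp_sub_sub_le (hK0 : ∀ u, 0 ≤ K u) (hK : Integrable K)
    (hK1 : ∫ u, K u = 1) (hf : Integrable f) (hg : Integrable g) :
    ∫ x, |(∫ u, K u * f (x - u)) - g x| ≤ ∫ u, K u * ∫ x, |f (x - u) - g x| := by
  have hKf : Integrable (fun p : ℝ × ℝ => K p.2 * f (p.1 - p.2)) (volume.prod volume) := by
    simpa using hK.convolution_integrand (ContinuousLinearMap.mul ℝ ℝ) hf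
  have hF : Integrable (fun p : ℝ × ℝ => K p.2 * |f (p.1 - p.2) - g p.1|)
      (volume.prod volume) := by
    refine (hKf.sub (hg.mul_prod hK)).abs.congr (ae_of_all _ fun p => ?_)
    simp only [Pi.sub_apply, mul_comm (g p.1), ← mul_sub, abs_mul, abs_of_nonneg (hK0 _)]
  have hpt : ∀ᵐ x, |(∫ u, K u * f (x - u)) - g x| ≤ ∫ u, K u * |f (x - u) - g x| := by
    filter_upwards [hKf.prod_right_ae] with x hx
    calc |(∫ u, K u * f (x - u)) - g x| = |∫ u, (K u * f (x - u) - K u * g x)| := by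
          rw [integral_sub hx (hK.mul_const _), integral_mul_const, hK1, one_mul]
      _ ≤ ∫ u, |K u * f (x - u) - K u * g x| := abs_integral_le_integral_abs
      _ = ∫ u, K u * |f (x - u) - g x| := by
          simp only [← mul_sub, abs_mul, abs_of_nonneg (hK0 _)]
  calc ∫ x, |(∫ u, K u * f (x - u)) - g x| ≤ ∫ x, ∫ u, K u * |f (x - u) - g x| :=
        integral_mono_of_nonneg (ae_of_all _ fun _ => abs_nonneg _) hF.integral_prod_left hpt
    _ = ∫ u, ∫ x, K u * |f (x - u) - g x| := integral_integral_swap hF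
    _ = ∫ u, K u * ∫ x, |f (x - u) - g x| := by simp only [integral_const_mul]

lemma integral_abs_integral_mul_comp_sub_sub_le_add {g' : ℝ → ℝ} (hK0 : ∀ u, 0 ≤ K u)
    (hK : Integrable K) (hK1 : ∫ u, K u = 1) (hKmom : Integrable fun u => |u| * K u)
    (hf : Integrable f) (hg : Integrable g) (hAC : ∀ a b, g b - g a = ∫ x in a..b, g' x)
    (hg' : Integrable g') :
    ∫ x, |(∫ u, K u * f (x - u)) - g x| ≤
      (∫ x, |f x - g x|) + (∫ u, |u| * K u) * ∫ x, |g' x| := calc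
  _ ≤ ∫ u, K u * ∫ x, |f (x - u) - g x| :=
      integral_abs_integral_mul_comp_sub_sub_le hK0 hK hK1 hf hg
  _ ≤ ∫ u, (K u * (∫ x, |f x - g x|) + |u| * K u * ∫ x, |g' x|) := by
      refine integral_mono_of_nonneg
        (ae_of_all _ fun u => mul_nonneg (hK0 u) (integral_nonneg fun _ => abs_nonneg _))
        ((hK.mul_const _).add (hKmom.mul_const _)) (ae_of_all _ fun u => ?_)
      calc K u * ∫ x, |f (x - u) - g x|
          ≤ K u * ((∫ x, |f x - g x|) + |u| * ∫ x, |g' x|) :=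
            mul_le_mul_of_nonneg_left (integral_abs_comp_sub_sub_le_add hAC hf hg hg' u) (hK0 u)
        _ = K u * (∫ x, |f x - g x|) + |u| * K u * ∫ x, |g' x| := by ring
  _ = (∫ x, |f x - g x|) + (∫ u, |u| * K u) * ∫ x, |g' x| := by
      rw [integral_add (hK.mul_const _) (hKmom.mul_const _), integral_mul_const, integral_mul_const,
        hK1, one_mul]

end Smoothing

/-- **Hellinger error of Gaussian smoothing** (quantitative form of Lemma 1).
Let `g₀` be an absolutely continuous probability density on `ℝ` with Lebesgue-integrable weak
derivative `g₀'`; let `ghat` be any probability density, `λ > 0`, and let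
`ghat_λ(x) = λ⁻¹ ∫ ghat(t) φ((x−t)/λ) dt` be the Gaussian smoothing of `ghat`.  Then
`H(ghat_λ, g₀)² ≤ √2·H(ghat, g₀) + 2√(2/π)·λ·∫|g₀'|`. -/
theorem hellinger_error_of_gaussian_smoothing
    (g₀ g₀' : ℝ → ℝ) (hg₀ : IsProbDensity g₀)
    (hAC : ∀ a b : ℝ, g₀ b - g₀ a = ∫ x in a..b, g₀' x)
    (hg₀' : Integrable g₀')
    (ghat : ℝ → ℝ) (hghat : IsProbDensity ghat)
    (l : ℝ) (hl : 0 < l) :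
    (hellingerDist (fun x => l⁻¹ * ∫ t, ghat t * gaussPdf ((x - t) / l)) g₀) ^ 2 ≤
      Real.sqrt 2 * hellingerDist ghat g₀ +
        2 * Real.sqrt (2 / Real.pi) * l * ∫ z, |g₀' z| := by
  simp only [inv_mul_integral_mul_gaussPdf_eq_integral_gaussKernel_mul]
  have hK := integrable_gaussKernel hl.ne'
  have hG0 : ∀ x, 0 ≤ ∫ u, gaussKernel l u * ghat (x - u) := fun x =>
    integral_nonneg fun u => mul_nonneg (gaussKernel_nonneg hl.le u) (hghat.1 _)
  have hGi : Integrable fun x => ∫ u, gaussKernel l u * ghat (x - u) :=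
    hK.integrable_convolution (ContinuousLinearMap.mul ℝ ℝ) hghat.2.1
  have hL1 := integral_abs_integral_mul_comp_sub_sub_le_add (gaussKernel_nonneg hl.le) hK
    (integral_gaussKernel hl) (integrable_abs_mul_gaussKernel hl) hghat.2.1 hg₀.2.1 hAC hg₀'
  rw [integral_abs_mul_gaussKernel hl] at hL1
  have hTV := integral_abs_sub_le_two_sqrt_two_mul_hellingerDist hghat hg₀
  have hmom : 0 ≤ l * √(2 / π) * ∫ z, |g₀' z| :=
    mul_nonneg (by positivity) (integral_nonneg fun _ => abs_nonneg _)
  calc _ ≤ 1 / 2 * ∫ x, |(∫ u, gaussKernel l u * ghat (x - u)) - g₀ x| :=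
        sq_hellingerDist_le_half_integral_abs_sub hG0 hg₀.1 hGi hg₀.2.1
    _ ≤ _ := by linarith
end
end

section
/- (Orthogonality of the efficient score to all nuisance scores: adaptivity of the two-sample model.) In the one-sample representation of the two-sample model, for every measurable b : ℝ → ℝ with ∫ b(x)² g(x) dx < ∞ (in particular for every b in the tangent set, i.e., with ∫ b g = 0 and ∫ x b(x) g(x) dx = 0), one has E[ (Z·b(U−μ) + (1−Z)·b(U−μ−Δ)) · l*(Z,U) ] = 0. -/
open MeasureTheory

noncomputable section

/-- The joint law of `(Z,U)` in the one-sample representation of the two-sample model: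
`Z ~ Bernoulli(λ)`; conditionally on `Z = 1`, `U` has density `g(·−μ)`; conditionally on
`Z = 0`, `U` has density `g(·−μ−Δ)`. -/
def jointLaw (l μ Δ : ℝ) (g : ℝ → ℝ) : Measure (ℝ × ℝ) :=
  (ENNReal.ofReal l) •
      ((Measure.dirac (1 : ℝ)).prod
        (volume.withDensity fun u => ENNReal.ofReal (g (u - μ)))) +
    (ENNReal.ofReal (1 - l)) •
      ((Measure.dirac (0 : ℝ)).prod
        (volume.withDensity fun u => ENNReal.ofReal (g (u - μ - Δ))))

/-- Score for `Δ`: `l_Δ(z,u) = −(1−z)·s(u−μ−Δ)`. -/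
def scoreDelta (s : ℝ → ℝ) (μ Δ : ℝ) (z u : ℝ) : ℝ := -(1 - z) * s (u - μ - Δ)

/-- Score for `μ`: `l_μ(z,u) = −z·s(u−μ) − (1−z)·s(u−μ−Δ)`. -/
def scoreMu (s : ℝ → ℝ) (μ Δ : ℝ) (z u : ℝ) : ℝ :=
  -z * s (u - μ) - (1 - z) * s (u - μ - Δ)

/-- Score for `λ`: `l_λ(z,u) = z/λ − (1−z)/(1−λ)`. -/
def scoreLambda (l : ℝ) (z : ℝ) : ℝ := z / l - (1 - z) / (1 - l)

/-- The efficient score `l*(z,u) = z(1−λ)·s(u−μ) − λ(1−z)·s(u−μ−Δ)`. -/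
def scoreStar (s : ℝ → ℝ) (l μ Δ : ℝ) (z u : ℝ) : ℝ :=
  z * (1 - l) * s (u - μ) - l * (1 - z) * s (u - μ - Δ)

/-! On `Z = 1` the integrand is `(1 − λ)·(b s)(U − μ)` and on `Z = 0` it is
`−λ·(b s)(U − μ − Δ)`, so after recentring both conditional expectations are multiples of
`∫ b s g`, finite by AM–GM, and they cancel: `λ(1 − λ) − (1 − λ)λ = 0`. The delicate point is
measurability of the score `g'/g`: `g'` is locally integrable, since otherwise the junk value `0`
of `∫ a..c g'` would force `g` to be constant off a point, contradicting `∫ g = 1`. -/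

theorem locallyIntegrable_of_sub_eq_intervalIntegral {E : Type*} [NormedAddCommGroup E]
    [NormedSpace ℝ E] {f g : ℝ → E} (hfg : ∀ a c : ℝ, g c - g a = ∫ x in a..c, f x)
    (hg : Integrable g) (hg0 : ∫ x, g x ≠ 0) : LocallyIntegrable f := by
  intro x
  by_contra hx
  have hconst : ∀ a c : ℝ, a < x → x < c → g c = g a := by
    intro a c hax hxc
    have hnot : ¬ IntervalIntegrable f volume a c := fun hI =>
      hx ⟨Set.Ioc a c, Ioc_mem_nhds hax hxc, hI.1⟩
    simpa [intervalIntegral.integral_undef hnot, sub_eq_zero] using hfg a c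
  have hae : g =ᵐ[volume] fun _ => g (x - 1) := by
    filter_upwards [compl_mem_ae_iff.mpr (Real.volume_singleton (a := x))] with y hy
    rcases lt_or_gt_of_ne (Set.mem_compl_singleton_iff.mp hy) with hyx | hxy
    · rw [← hconst y (x + 1) hyx (by linarith), hconst (x - 1) (x + 1) (by linarith) (by linarith)]
    · exact hconst (x - 1) y (by linarith) hxy
  have hzero : g (x - 1) = 0 := by
    refine (integrable_const_iff.mp (hg.congr hae)).resolve_right fun h => ?_
    simpa using h.measure_univ_lt_top
  exact hg0 (by simp [integral_congr_ae hae, hzero])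

theorem integrable_mul_mul_of_integrable_sq_mul {α : Type*} [MeasurableSpace α] {μ : Measure α}
    {b s w : α → ℝ} (hw : ∀ x, 0 ≤ w x) (hb : AEStronglyMeasurable b μ)
    (hs : AEStronglyMeasurable s μ) (hw' : AEStronglyMeasurable w μ)
    (hb2 : Integrable (fun x => b x ^ 2 * w x) μ) (hs2 : Integrable (fun x => s x ^ 2 * w x) μ) :
    Integrable (fun x => b x * s x * w x) μ := by
  refine ((hb2.add hs2).div_const 2).mono' ((hb.mul hs).mul hw') (ae_of_all _ fun x => ?_)
  have hamgm : |b x * s x| ≤ (b x ^ 2 + s x ^ 2) / 2 := by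
    rw [abs_mul]; nlinarith [sq_nonneg (|b x| - |s x|), sq_abs (b x), sq_abs (s x)]
  calc ‖b x * s x * w x‖ = |b x * s x| * w x := by
        rw [Real.norm_eq_abs, abs_mul, abs_of_nonneg (hw x)]
    _ ≤ (b x ^ 2 + s x ^ 2) / 2 * w x := by gcongr; exact hw x
    _ = (b x ^ 2 * w x + s x ^ 2 * w x) / 2 := by ring

section ShiftedDensity

variable {E : Type*} [NormedAddCommGroup E] [NormedSpace ℝ E] {g : ℝ → ℝ}

theorem aemeasurable_ofReal_comp_sub (hgm : AEMeasurable g) (c : ℝ) :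
    AEMeasurable (fun u => ENNReal.ofReal (g (u - c))) :=
  (hgm.comp_quasiMeasurePreserving
    (measurePreserving_sub_right volume c).quasiMeasurePreserving).ennreal_ofReal

theorem integrable_withDensity_comp_sub_iff (hg0 : ∀ x, 0 ≤ g x) (hgm : AEMeasurable g) (c : ℝ)
    (h : ℝ → E) :
    Integrable h (volume.withDensity fun u => ENNReal.ofReal (g (u - c))) ↔
      Integrable fun x => g x • h (x + c) := by
  rw [integrable_withDensity_iff_integrable_smul₀' (aemeasurable_ofReal_comp_sub hgm c) (by simp)]
  simp only [ENNReal.toReal_ofReal (hg0 _)]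
  refine ⟨fun hi => ?_, fun hi => ?_⟩
  · simpa using hi.comp_add_right c
  · simpa [← sub_eq_add_neg] using hi.comp_add_right (-c)

theorem integral_withDensity_comp_sub (hg0 : ∀ x, 0 ≤ g x) (hgm : AEMeasurable g) (c : ℝ)
    (h : ℝ → E) :
    ∫ u, h u ∂volume.withDensity (fun u => ENNReal.ofReal (g (u - c))) =
      ∫ x, g x • h (x + c) := by
  rw [integral_withDensity_eq_integral_toReal_smul₀ (aemeasurable_ofReal_comp_sub hgm c) (by simp),
    ← integral_add_right_eq_self _ c]
  simp [hg0]

end ShiftedDensity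

theorem integral_dirac_prod {α β E : Type*} [MeasurableSpace α] [MeasurableSingletonClass α]
    [MeasurableSpace β] [NormedAddCommGroup E] [NormedSpace ℝ E] (a : α) (ν : Measure β) [SFinite ν]
    (F : α × β → E) : ∫ p, F p ∂(Measure.dirac a).prod ν = ∫ y, F (a, y) ∂ν := by
  rw [Measure.dirac_prod, (measurableEmbedding_prodMk_left a).integral_map]

theorem integrable_dirac_prod_iff {α β E : Type*} [MeasurableSpace α] [MeasurableSingletonClass α]
    [MeasurableSpace β] [NormedAddCommGroup E] (a : α) (ν : Measure β) [SFinite ν]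
    (F : α × β → E) :
    Integrable F ((Measure.dirac a).prod ν) ↔ Integrable (fun y => F (a, y)) ν := by
  rw [Measure.dirac_prod, (measurableEmbedding_prodMk_left a).integrable_map_iff]
  rfl

section JointLaw

variable {E : Type*} [NormedAddCommGroup E] [NormedSpace ℝ E] {l μ Δ : ℝ} {g : ℝ → ℝ}
  {F : ℝ × ℝ → E}

theorem jointLaw_eq_sub_add :
    jointLaw l μ Δ g = ENNReal.ofReal l • (Measure.dirac (1 : ℝ)).prod
        (volume.withDensity fun u => ENNReal.ofReal (g (u - μ))) +
      ENNReal.ofReal (1 - l) • (Measure.dirac (0 : ℝ)).prod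
        (volume.withDensity fun u => ENNReal.ofReal (g (u - (μ + Δ)))) := by
  simp only [jointLaw, sub_sub]

variable (hg0 : ∀ x, 0 ≤ g x) (hgm : AEMeasurable g)
include hg0 hgm

theorem integrable_dirac_prod_withDensity_comp_sub_iff (a c : ℝ) :
    Integrable F ((Measure.dirac a).prod
        (volume.withDensity fun u => ENNReal.ofReal (g (u - c)))) ↔
      Integrable fun x => g x • F (a, x + c) := by
  rw [integrable_dirac_prod_iff, integrable_withDensity_comp_sub_iff hg0 hgm]

variable (h1 : Integrable fun x => g x • F (1, x + μ))
  (h0 : Integrable fun x => g x • F (0, x + (μ + Δ)))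
include h1 h0

theorem integrable_jointLaw : Integrable F (jointLaw l μ Δ g) := by
  rw [jointLaw_eq_sub_add]
  exact (((integrable_dirac_prod_withDensity_comp_sub_iff hg0 hgm _ _).2 h1).smul_measure
    ENNReal.ofReal_ne_top).add_measure
    (((integrable_dirac_prod_withDensity_comp_sub_iff hg0 hgm _ _).2 h0).smul_measure
      ENNReal.ofReal_ne_top)

theorem integral_jointLaw (hl0 : 0 ≤ l) (hl1 : l ≤ 1) :
    ∫ p, F p ∂jointLaw l μ Δ g =
      l • (∫ x, g x • F (1, x + μ)) + (1 - l) • ∫ x, g x • F (0, x + (μ + Δ)) := by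
  have hF := integrable_jointLaw (l := l) hg0 hgm h1 h0
  rw [jointLaw_eq_sub_add] at hF ⊢
  rw [integral_add_measure hF.left_of_add_measure hF.right_of_add_measure,
    integral_smul_measure, integral_smul_measure, integral_dirac_prod, integral_dirac_prod,
    integral_withDensity_comp_sub hg0 hgm, integral_withDensity_comp_sub hg0 hgm,
    ENNReal.toReal_ofReal hl0, ENNReal.toReal_ofReal (sub_nonneg.2 hl1)]

end JointLaw

theorem efficient_score_orthogonal_to_nuisance_scores_general
    {Ω : Type*} [MeasurableSpace Ω] (P : Measure Ω)
    (Z U : Ω → ℝ) (hZ : Measurable Z) (hU : Measurable U)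
    (l μ Δ : ℝ) (hl0 : 0 < l) (hl1 : l < 1)
    (g g' : ℝ → ℝ) (hg : IsProbDensity g)
    (hAC : ∀ a c : ℝ, g c - g a = ∫ x in a..c, g' x)
    (hFI : Integrable fun x => (g' x / g x) ^ 2 * g x)
    (hlaw : P.map (fun ω => (Z ω, U ω)) = jointLaw l μ Δ g)
    (b : ℝ → ℝ) (hb : Measurable b)
    (hb2 : Integrable fun x => (b x) ^ 2 * g x) :
    ∫ ω, (Z ω * b (U ω - μ) + (1 - Z ω) * b (U ω - μ - Δ)) *
        scoreStar (fun x => g' x / g x) l μ Δ (Z ω) (U ω) ∂P = 0 := by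
  obtain ⟨hg0, hgi, hg1⟩ := hg
  set s : ℝ → ℝ := fun x => g' x / g x
  have hs : AEStronglyMeasurable s :=
    ((locallyIntegrable_of_sub_eq_intervalIntegral hAC hgi (by simp [hg1])).aestronglyMeasurable
      |>.aemeasurable.div hgi.aemeasurable).aestronglyMeasurable
  have hbsg : Integrable fun x => b x * s x * g x :=
    integrable_mul_mul_of_integrable_sq_mul hg0 hb.aestronglyMeasurable hs hgi.1 hb2 hFI
  set F : ℝ × ℝ → ℝ := fun p =>
    (p.1 * b (p.2 - μ) + (1 - p.1) * b (p.2 - μ - Δ)) * scoreStar s l μ Δ p.1 p.2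
  have hF1 : ∀ x, g x • F (1, x + μ) = (1 - l) * (b x * s x * g x) := fun x => by
    simp only [F, scoreStar, smul_eq_mul]; ring_nf
  have hF0 : ∀ x, g x • F (0, x + (μ + Δ)) = -l * (b x * s x * g x) := fun x => by
    simp only [F, scoreStar, smul_eq_mul]; ring_nf
  have h1 : Integrable fun x => g x • F (1, x + μ) := by
    simpa only [hF1] using hbsg.const_mul (1 - l)
  have h0 : Integrable fun x => g x • F (0, x + (μ + Δ)) := by
    simpa only [hF0] using hbsg.const_mul (-l)
  calc _ = ∫ p, F p ∂(P.map fun ω => (Z ω, U ω)) :=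
        (integral_map (hZ.prodMk hU).aemeasurable
          (hlaw ▸ (integrable_jointLaw hg0 hgi.1.aemeasurable h1 h0).1)).symm
    _ = 0 := by
      rw [hlaw, integral_jointLaw hg0 hgi.1.aemeasurable h1 h0 hl0.le hl1.le]
      simp only [hF1, hF0, integral_const_mul, smul_eq_mul]
      ring

/-- **Orthogonality of the efficient score to all nuisance scores (adaptivity).**
In the one-sample representation of the two-sample model, for every measurable `b : ℝ → ℝ`
with `∫ b² g < ∞` (in particular for every `b` in the tangent set), the nuisance score
`(z,u) ↦ z·b(u−μ) + (1−z)·b(u−μ−Δ)` is orthogonal to `l*` in `L₂(P)`. -/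
theorem efficient_score_orthogonal_to_nuisance_scores
    {Ω : Type*} [MeasurableSpace Ω] (P : Measure Ω) [IsProbabilityMeasure P]
    (Z U : Ω → ℝ) (hZ : Measurable Z) (hU : Measurable U)
    (l μ Δ : ℝ) (hl0 : 0 < l) (hl1 : l < 1)
    (g g' : ℝ → ℝ) (hg : IsProbDensity g)
    (hAC : ∀ a c : ℝ, g c - g a = ∫ x in a..c, g' x)
    (hFI : Integrable fun x => (g' x / g x) ^ 2 * g x)
    (hlaw : P.map (fun ω => (Z ω, U ω)) = jointLaw l μ Δ g)
    (b : ℝ → ℝ) (hb : Measurable b)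
    (hb2 : Integrable fun x => (b x) ^ 2 * g x) :
    ∫ ω, (Z ω * b (U ω - μ) + (1 - Z ω) * b (U ω - μ - Δ)) *
        scoreStar (fun x => g' x / g x) l μ Δ (Z ω) (U ω) ∂P = 0 :=
  efficient_score_orthogonal_to_nuisance_scores_general P Z U hZ hU l μ Δ hl0 hl1 g g' hg hAC hFI
    hlaw b hb hb2
end
end

section
/- (Logarithmic quantile tail bound.) Let h be a probability density on ℝ whose support {h > 0} is an interval, let H be its distribution function, and suppose there exists ω > 0 such that h(x) ≥ ω · min(H(x), 1−H(x)) for all x ∈ ℝ. Then for every η ∈ (0, 1/2): H⁻¹(1−η) ≤ H⁻¹(1/2) + ω⁻¹ · log(1/(2η)) and H⁻¹(η) ≥ H⁻¹(1/2) − ω⁻¹ · log(1/(2η)). -/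
open MeasureTheory

noncomputable section

/-- The distribution function of a density `f`: `F(x) = ∫_{−∞}^x f`. -/
def cdfOf (f : ℝ → ℝ) (x : ℝ) : ℝ := ∫ t in Set.Iic x, f t

/-- The quantile function `F⁻¹(t) = inf {x : F(x) ≥ t}`. -/
def quantile (F : ℝ → ℝ) (t : ℝ) : ℝ := sInf {x | t ≤ F x}

/-!
Write `H` for the distribution function and `m` for a median, `H m = 1/2`. On `[m, ∞)` the
lower bound on `h` reads `h ≥ ω (1 - H)`, so over a step `[x, y] ⊆ [m, ∞)` the tail `1 - H` drops
at least by the factor `1 + ω (y - x)`. Cutting `[m, m + c]` into `n` equal steps and letting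
`n → ∞` gives `1 - H (m + c) ≤ e^{-ω c} / 2`, which is `η` for `c = ω⁻¹ log (1/(2η))`; the left
tail is the mirror image.
-/

open Set Filter Topology

section Quantile

variable {F : ℝ → ℝ} {t : ℝ}

theorem apply_quantile_eq (hF : Continuous F) (hbot : Tendsto F atBot (𝓝 0))
    (htop : Tendsto F atTop (𝓝 1)) (ht : t ∈ Ioo 0 1) : F (quantile F t) = t := by
  set S := {x | t ≤ F x}
  have hne : S.Nonempty := (htop.eventually (eventually_ge_nhds ht.2)).exists
  obtain ⟨x₀, hx₀⟩ := eventually_atBot.1 (hbot.eventually (eventually_lt_nhds ht.1))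
  have hbdd : BddBelow S :=
    ⟨x₀, fun y hy => by_contra fun hlt => (hx₀ y (not_le.1 hlt).le).not_ge hy⟩
  have hmem : t ≤ F (quantile F t) := (isClosed_le continuous_const hF).csInf_mem hne hbdd
  have hleft : ∀ᶠ x in 𝓝[<] quantile F t, F x ≤ t :=
    eventually_nhdsWithin_of_forall fun x hx =>
      le_of_lt (not_le.1 fun hxS => (csInf_le hbdd hxS).not_gt hx)
  exact le_antisymm (le_of_tendsto hF.continuousWithinAt.tendsto hleft) hmem

theorem quantile_le_of_le (hF : Monotone F) {a x : ℝ} (ha : F a < t) (hx : t ≤ F x) :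
    quantile F t ≤ x :=
  csInf_le ⟨a, fun _ hy => (hF.reflect_lt (ha.trans_le hy)).le⟩ hx

theorem le_quantile_of_forall_lt (hne : ∃ x, t ≤ F x) {a : ℝ} (ha : ∀ y < a, F y < t) :
    a ≤ quantile F t :=
  le_csInf hne fun _ hy => not_lt.1 fun hlt => (ha _ hlt).not_ge hy

end Quantile

section ExponentialDecay

variable {G : ℝ → ℝ} {a w : ℝ}

theorem mul_one_add_pow_le_of_step (hw : 0 ≤ w)
    (hstep : ∀ x y, a ≤ x → x ≤ y → G y * (1 + w * (y - x)) ≤ G x)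
    {d : ℝ} (hd : 0 ≤ d) (n : ℕ) : G (a + n * d) * (1 + w * d) ^ n ≤ G a := by
  induction n with
  | zero => simp
  | succ n ih =>
    have hx : a ≤ a + n * d := le_add_of_nonneg_right (by positivity)
    have := hstep _ (a + (n + 1 : ℕ) * d) hx (by push_cast; linarith)
    calc G (a + (n + 1 : ℕ) * d) * (1 + w * d) ^ (n + 1)
        = G (a + (n + 1 : ℕ) * d) * (1 + w * ((a + (n + 1 : ℕ) * d) - (a + n * d)))
            * (1 + w * d) ^ n := by push_cast; ring
      _ ≤ G (a + n * d) * (1 + w * d) ^ n := by gcongr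
      _ ≤ G a := ih

theorem le_exp_neg_mul_of_step (hw : 0 ≤ w)
    (hstep : ∀ x y, a ≤ x → x ≤ y → G y * (1 + w * (y - x)) ≤ G x)
    {c : ℝ} (hc : 0 ≤ c) : G (a + c) ≤ Real.exp (-(w * c)) * G a := by
  have hn : ∀ᶠ n : ℕ in atTop, G (a + c) * (1 + w * c / n) ^ n ≤ G a := by
    filter_upwards [eventually_ne_atTop 0] with n hn
    have := mul_one_add_pow_le_of_step hw hstep (div_nonneg hc n.cast_nonneg) n
    rwa [mul_div_cancel₀ c (Nat.cast_ne_zero.2 hn), ← mul_div_assoc] at this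
  have := le_of_tendsto (tendsto_const_nhds.mul (Real.tendsto_one_add_div_pow_exp (w * c))) hn
  rwa [Real.exp_neg, ← div_eq_inv_mul, le_div_iff₀ (Real.exp_pos _)]

end ExponentialDecay

theorem tendsto_cdfOf_atBot (h : ℝ → ℝ) : Tendsto (cdfOf h) atBot (𝓝 0) :=
  tendsto_integral_Iic_zero tendsto_id

namespace IsProbDensity

variable {h : ℝ → ℝ}

theorem cdfOf_sub_cdfOf (hh : IsProbDensity h) {x y : ℝ} (hxy : x ≤ y) :
    cdfOf h y - cdfOf h x = ∫ t in Ioc x y, h t := by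
  rw [cdfOf, cdfOf, intervalIntegral.integral_Iic_sub_Iic hh.2.1.integrableOn
    hh.2.1.integrableOn, intervalIntegral.integral_of_le hxy]

theorem monotone_cdfOf (hh : IsProbDensity h) : Monotone (cdfOf h) := fun x y hxy => by
  have := setIntegral_nonneg (μ := volume) measurableSet_Ioc fun t (_ : t ∈ Ioc x y) => hh.1 t
  linarith [hh.cdfOf_sub_cdfOf hxy]

theorem mul_sub_le_cdfOf_sub (hh : IsProbDensity h) {x y c : ℝ} (hxy : x ≤ y)
    (hc : ∀ t ∈ Ioc x y, c ≤ h t) :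
    c * (y - x) ≤ cdfOf h y - cdfOf h x := by
  have := setIntegral_mono_on (f := fun _ => c) (integrableOn_const (by simp))
    hh.2.1.integrableOn measurableSet_Ioc hc
  rwa [setIntegral_const, measureReal_def, Real.volume_Ioc, smul_eq_mul,
    ENNReal.toReal_ofReal (sub_nonneg.2 hxy), mul_comm, ← hh.cdfOf_sub_cdfOf hxy] at this

theorem continuous_cdfOf (hh : IsProbDensity h) : Continuous (cdfOf h) := by
  have : cdfOf h = fun x => cdfOf h 0 + ∫ t in (0 : ℝ)..x, h t := by
    funext x
    rw [cdfOf, cdfOf, ← intervalIntegral.integral_Iic_sub_Iic hh.2.1.integrableOn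
      hh.2.1.integrableOn]
    ring
  rw [this]
  exact continuous_const.add (hh.2.1.continuous_primitive 0)

theorem tendsto_cdfOf_atTop (hh : IsProbDensity h) : Tendsto (cdfOf h) atTop (𝓝 1) := by
  rw [← hh.2.2]
  exact (aecover_Iic tendsto_id).integral_tendsto_of_countably_generated hh.2.1

variable {w : ℝ}

theorem one_sub_cdfOf_step (hh : IsProbDensity h)
    (hlow : ∀ x, w * min (cdfOf h x) (1 - cdfOf h x) ≤ h x) {a : ℝ} (ha : 1 / 2 ≤ cdfOf h a)
    (hw : 0 ≤ w) {x y : ℝ} (hax : a ≤ x) (hxy : x ≤ y) :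
    (1 - cdfOf h y) * (1 + w * (y - x)) ≤ 1 - cdfOf h x := by
  have key := hh.mul_sub_le_cdfOf_sub hxy (c := w * (1 - cdfOf h y)) fun t ht => by
    have hat : 1 / 2 ≤ cdfOf h t := ha.trans (hh.monotone_cdfOf (hax.trans ht.1.le))
    calc w * (1 - cdfOf h y) ≤ w * (1 - cdfOf h t) := by
          gcongr; exact hh.monotone_cdfOf ht.2
      _ = w * min (cdfOf h t) (1 - cdfOf h t) := by rw [min_eq_right (by linarith)]
      _ ≤ h t := hlow t
  linarith

theorem cdfOf_neg_step (hh : IsProbDensity h)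
    (hlow : ∀ x, w * min (cdfOf h x) (1 - cdfOf h x) ≤ h x) {a : ℝ} (ha : cdfOf h a ≤ 1 / 2)
    (hw : 0 ≤ w) {x y : ℝ} (hax : -a ≤ x) (hxy : x ≤ y) :
    cdfOf h (-y) * (1 + w * (y - x)) ≤ cdfOf h (-x) := by
  have key := hh.mul_sub_le_cdfOf_sub (neg_le_neg hxy) (c := w * cdfOf h (-y)) fun t ht => by
    have hta : cdfOf h t ≤ 1 / 2 := (hh.monotone_cdfOf (ht.2.trans (neg_le.1 hax))).trans ha
    calc w * cdfOf h (-y) ≤ w * cdfOf h t := by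
          gcongr; exact hh.monotone_cdfOf ht.1.le
      _ = w * min (cdfOf h t) (1 - cdfOf h t) := by rw [min_eq_left (by linarith)]
      _ ≤ h t := hlow t
  linarith

theorem one_sub_cdfOf_add_le (hh : IsProbDensity h)
    (hlow : ∀ x, w * min (cdfOf h x) (1 - cdfOf h x) ≤ h x) {a : ℝ} (ha : 1 / 2 ≤ cdfOf h a)
    (hw : 0 ≤ w) {c : ℝ} (hc : 0 ≤ c) :
    1 - cdfOf h (a + c) ≤ Real.exp (-(w * c)) * (1 - cdfOf h a) :=
  le_exp_neg_mul_of_step (G := fun x => 1 - cdfOf h x) hw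
    (fun _ _ => hh.one_sub_cdfOf_step hlow ha hw) hc

theorem cdfOf_sub_le (hh : IsProbDensity h)
    (hlow : ∀ x, w * min (cdfOf h x) (1 - cdfOf h x) ≤ h x) {a : ℝ} (ha : cdfOf h a ≤ 1 / 2)
    (hw : 0 ≤ w) {c : ℝ} (hc : 0 ≤ c) : cdfOf h (a - c) ≤ Real.exp (-(w * c)) * cdfOf h a := by
  simpa [sub_eq_neg_add] using le_exp_neg_mul_of_step (G := fun x => cdfOf h (-x)) hw
    (fun _ _ => hh.cdfOf_neg_step hlow ha hw) hc

end IsProbDensity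

theorem logarithmic_quantile_tail_bound_general
    (h : ℝ → ℝ) (hh : IsProbDensity h)
    (w : ℝ) (hw : 0 < w)
    (hlow : ∀ x : ℝ, w * min (cdfOf h x) (1 - cdfOf h x) ≤ h x)
    (η : ℝ) (hη0 : 0 < η) (hη : η < 1 / 2) :
    quantile (cdfOf h) (1 - η) ≤
        quantile (cdfOf h) (1 / 2) + w⁻¹ * Real.log (1 / (2 * η)) ∧
      quantile (cdfOf h) (1 / 2) - w⁻¹ * Real.log (1 / (2 * η)) ≤
        quantile (cdfOf h) η := by
  set m := quantile (cdfOf h) (1 / 2)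
  set c := w⁻¹ * Real.log (1 / (2 * η))
  have hm : cdfOf h m = 1 / 2 := apply_quantile_eq hh.continuous_cdfOf (tendsto_cdfOf_atBot h)
    hh.tendsto_cdfOf_atTop (by norm_num)
  have hc : 0 ≤ c := mul_nonneg (inv_nonneg.2 hw.le)
    (Real.log_nonneg ((one_le_div (by positivity)).2 (by linarith)))
  have hexp : Real.exp (-(w * c)) = 2 * η := by
    rw [mul_inv_cancel_left₀ hw.ne', one_div, Real.log_inv, neg_neg, Real.exp_log (by positivity)]
  constructor
  · have htail := hh.one_sub_cdfOf_add_le hlow hm.ge hw.le hc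
    rw [hexp, hm] at htail
    exact quantile_le_of_le hh.monotone_cdfOf (a := m) (by linarith) (by linarith)
  · refine le_quantile_of_forall_lt ⟨m, by linarith⟩ fun y hy => ?_
    have htail := hh.cdfOf_sub_le hlow hm.le hw.le (c := m - y) (by linarith)
    rw [sub_sub_cancel, hm] at htail
    have hdecay : Real.exp (-(w * (m - y))) < Real.exp (-(w * c)) :=
      Real.exp_lt_exp.2 (by gcongr; linarith)
    linarith

/-- **Logarithmic quantile tail bound.**  Let `h` be a probability density on `ℝ` whose
support `{h > 0}` is an interval, with distribution function `H`, and suppose there is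
`ω > 0` with `h(x) ≥ ω min(H(x), 1−H(x))` for all `x`.  Then for every `η ∈ (0,1/2)`:
`H⁻¹(1−η) ≤ H⁻¹(1/2) + ω⁻¹ log(1/(2η))` and `H⁻¹(η) ≥ H⁻¹(1/2) − ω⁻¹ log(1/(2η))`. -/
theorem logarithmic_quantile_tail_bound
    (h : ℝ → ℝ) (hh : IsProbDensity h)
    (hsupp : Set.OrdConnected {x : ℝ | 0 < h x})
    (w : ℝ) (hw : 0 < w)
    (hlow : ∀ x : ℝ, w * min (cdfOf h x) (1 - cdfOf h x) ≤ h x)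
    (η : ℝ) (hη0 : 0 < η) (hη : η < 1 / 2) :
    quantile (cdfOf h) (1 - η) ≤
        quantile (cdfOf h) (1 / 2) + w⁻¹ * Real.log (1 / (2 * η)) ∧
      quantile (cdfOf h) (1 / 2) - w⁻¹ * Real.log (1 / (2 * η)) ≤
        quantile (cdfOf h) η :=
  logarithmic_quantile_tail_bound_general h hh w hw hlow η hη0 hη
end
end

section
/- (Score bound at a quantile of a log-concave density.) Let h be a log-concave probability density on ℝ with distribution function H, and let s denote the right derivative of log h, which is a nonincreasing function on the interior of {h > 0}. Then for every q ∈ (0, 1/2): s(H⁻¹(q))² ≤ (2/q) · ∫_{H⁻¹(q/2)}^{H⁻¹(1−q/2)} s(x)² h(x) dx. -/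
open MeasureTheory

noncomputable section

/-- `f` is log-concave: `f((1-t)x + ty) ≥ f(x)^{1-t} f(y)^t`, multiplicative form. -/
def IsLogConcave (f : ℝ → ℝ) : Prop :=
  ∀ x y a b : ℝ, 0 ≤ a → 0 ≤ b → a + b = 1 →
    f x ^ a * f y ^ b ≤ f (a * x + b * y)

section aux

variable {h : ℝ → ℝ}

lemma cdf_mono (hpos : ∀ x, 0 ≤ h x) (hint : Integrable h) : Monotone (cdfOf h) := by
  intro x y hxy
  exact setIntegral_mono_set hint.integrableOn
    (Filter.Eventually.of_forall hpos) (Set.Iic_subset_Iic.mpr hxy).eventuallyLE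

lemma cdf_eq (hint : Integrable h) (x : ℝ) :
    cdfOf h x = cdfOf h 0 + ∫ t in (0:ℝ)..x, h t := by
  rw [← intervalIntegral.integral_Iic_sub_Iic hint.integrableOn hint.integrableOn]
  unfold cdfOf; ring

lemma cdf_cont (hint : Integrable h) : Continuous (cdfOf h) := by
  have : Continuous fun x : ℝ => cdfOf h 0 + ∫ t in (0:ℝ)..x, h t :=
    continuous_const.add (hint.continuous_primitive 0)
  exact this.congr fun x => (cdf_eq hint x).symm

lemma cdf_tendsto_atTop (hint : Integrable h) (htot : ∫ x, h x = 1) :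
    Filter.Tendsto (cdfOf h) Filter.atTop (nhds 1) := by
  have h1 : Filter.Tendsto (fun x : ℝ => ∫ t in (0:ℝ)..x, h t) Filter.atTop
      (nhds (∫ t in Set.Ioi (0:ℝ), h t)) :=
    intervalIntegral_tendsto_integral_Ioi 0 hint.integrableOn Filter.tendsto_id
  have h2 : cdfOf h 0 + ∫ t in Set.Ioi (0:ℝ), h t = 1 := by
    rw [← htot]; exact intervalIntegral.integral_Iic_add_Ioi hint.integrableOn hint.integrableOn
  have := (tendsto_const_nhds (x := cdfOf h 0) (f := Filter.atTop (α := ℝ))).add h1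
  rw [h2] at this
  exact this.congr fun x => (cdf_eq hint x).symm

lemma cdf_tendsto_atBot (hint : Integrable h) :
    Filter.Tendsto (cdfOf h) Filter.atBot (nhds 0) := by
  have h1 : Filter.Tendsto (fun x : ℝ => ∫ t in x..(0:ℝ), h t) Filter.atBot
      (nhds (∫ t in Set.Iic (0:ℝ), h t)) :=
    intervalIntegral_tendsto_integral_Iic 0 hint.integrableOn Filter.tendsto_id
  have key : ∀ x : ℝ, cdfOf h x = cdfOf h 0 - ∫ t in x..(0:ℝ), h t := by
    intro x
    rw [← intervalIntegral.integral_Iic_sub_Iic hint.integrableOn hint.integrableOn]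
    unfold cdfOf; ring
  have := (tendsto_const_nhds (x := cdfOf h 0) (f := Filter.atBot (α := ℝ))).sub h1
  rw [show cdfOf h 0 - ∫ t in Set.Iic (0:ℝ), h t = 0 by unfold cdfOf; ring] at this
  exact this.congr fun x => (key x).symm

lemma cdf_quantile (hpos : ∀ x, 0 ≤ h x) (hint : Integrable h) (htot : ∫ x, h x = 1)
    {t : ℝ} (ht0 : 0 < t) (ht1 : t < 1) :
    cdfOf h (quantile (cdfOf h) t) = t := by
  set S : Set ℝ := {x | t ≤ cdfOf h x} with hS
  have hcont := cdf_cont hint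
  have hne : S.Nonempty := by
    obtain ⟨x, hx⟩ := ((cdf_tendsto_atTop hint htot).eventually (eventually_ge_nhds ht1)).exists
    exact ⟨x, hx⟩
  have hbdd : BddBelow S := by
    obtain ⟨x₀, hx₀⟩ := Filter.eventually_atBot.mp
      ((cdf_tendsto_atBot hint).eventually (eventually_lt_nhds ht0))
    refine ⟨x₀, fun z hz => ?_⟩
    by_contra hc
    exact absurd hz (not_le.mpr (hx₀ z (le_of_not_ge hc)))
  have hclosed : IsClosed S := isClosed_le continuous_const hcont
  have hmem : quantile (cdfOf h) t ∈ S := hclosed.csInf_mem hne hbdd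
  refine le_antisymm ?_ hmem
  by_contra hc
  have hlt : t < cdfOf h (quantile (cdfOf h) t) := lt_of_not_ge hc
  have hev : ∀ᶠ x in nhds (quantile (cdfOf h) t), t < cdfOf h x :=
    (hcont.tendsto _).eventually (eventually_gt_nhds hlt)
  have hev' : ∀ᶠ x in nhdsWithin (quantile (cdfOf h) t) (Set.Iio (quantile (cdfOf h) t)),
      t < cdfOf h x ∧ x ∈ Set.Iio (quantile (cdfOf h) t) :=
    ((hev.filter_mono nhdsWithin_le_nhds).and self_mem_nhdsWithin)
  obtain ⟨x, hx1, hx2⟩ := hev'.exists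
  exact absurd (csInf_le hbdd hx1.le) (not_le.mpr hx2)

end aux

/-- **Score bound at a quantile of a log-concave density.**  Let `h` be a log-concave
probability density with distribution function `H`, and let `s` be the right derivative of
`log h` (a nonincreasing function on `{x : 0 < H(x) < 1}`).  Then for every `q ∈ (0,1/2)`:
`s(H⁻¹(q))² ≤ (2/q) ∫_{H⁻¹(q/2)}^{H⁻¹(1−q/2)} s² h`. -/
theorem score_bound_at_quantile_logconcave
    (h s : ℝ → ℝ) (hh : IsProbDensity h) (hlc : IsLogConcave h)
    (hderiv : ∀ x ∈ {x : ℝ | 0 < cdfOf h x ∧ cdfOf h x < 1},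
      HasDerivWithinAt (fun y => Real.log (h y)) (s x) (Set.Ici x) x)
    (hmono : AntitoneOn s {x : ℝ | 0 < cdfOf h x ∧ cdfOf h x < 1})
    (q : ℝ) (hq0 : 0 < q) (hq : q < 1 / 2) :
    (s (quantile (cdfOf h) q)) ^ 2 ≤
      (2 / q) * ∫ x in (quantile (cdfOf h) (q / 2))..(quantile (cdfOf h) (1 - q / 2)),
        (s x) ^ 2 * h x := by
  obtain ⟨hpos, hint, htot⟩ := hh
  set H := cdfOf h with hH
  set a := quantile H (q / 2) with ha
  set m := quantile H q with hm
  set b := quantile H (1 - q / 2) with hb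
  have Ha : H a = q / 2 := cdf_quantile hpos hint htot (by linarith) (by linarith)
  have Hm : H m = q := cdf_quantile hpos hint htot hq0 (by linarith)
  have Hb : H b = 1 - q / 2 := cdf_quantile hpos hint htot (by linarith) (by linarith)
  have hHmono : Monotone H := cdf_mono hpos hint
  have ham : a ≤ m := by
    by_contra hc
    have := hHmono (le_of_not_ge hc)
    rw [Ha, Hm] at this; linarith
  have hmb : m ≤ b := by
    by_contra hc
    have := hHmono (le_of_not_ge hc)
    rw [Hm, Hb] at this; linarith
  have hab : a ≤ b := ham.trans hmb
  -- the interval is inside the region where `s` is antitone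
  have hsub : Set.Icc a b ⊆ {x : ℝ | 0 < H x ∧ H x < 1} := by
    intro x hx
    constructor
    · have := hHmono hx.1; rw [Ha] at this; linarith
    · have := hHmono hx.2; rw [Hb] at this; linarith
  have hant : AntitoneOn s (Set.Icc a b) := hmono.mono hsub
  -- boundedness of s on [a,b]
  set C : ℝ := max |s a| |s b| with hC
  have habmem : a ∈ Set.Icc a b := Set.left_mem_Icc.mpr hab
  have hbbmem : b ∈ Set.Icc a b := Set.right_mem_Icc.mpr hab
  have hbound : ∀ x ∈ Set.Icc a b, (s x) ^ 2 ≤ C ^ 2 := by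
    intro x hx
    have h1 : s x ≤ s a := hant habmem hx hx.1
    have h2 : s b ≤ s x := hant hx hbbmem hx.2
    have habs : |s x| ≤ C := by
      rw [abs_le]
      constructor
      · have : -|s b| ≤ s b := neg_abs_le _
        have : -C ≤ -|s b| := by simp [hC]
        linarith [neg_abs_le (s b), le_max_right |s a| |s b|]
      · exact h1.trans ((le_abs_self _).trans (le_max_left _ _))
    calc (s x) ^ 2 = |s x| ^ 2 := (sq_abs _).symm
      _ ≤ C ^ 2 := by
          have : (0:ℝ) ≤ |s x| := abs_nonneg _
          nlinarith [abs_nonneg (s x)]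
  -- integrability of s² h on [a,b]
  have hsmeas : AEMeasurable s (volume.restrict (Set.Icc a b)) :=
    aemeasurable_restrict_of_antitoneOn measurableSet_Icc hant
  have hhm : AEMeasurable h (volume.restrict (Set.Icc a b)) :=
    hint.aemeasurable.restrict
  have hmeas : AEStronglyMeasurable (fun x => (s x) ^ 2 * h x)
      (volume.restrict (Set.Icc a b)) := by
    exact (((hsmeas.pow_const 2).mul hhm)).aestronglyMeasurable
  have hIntObj : IntegrableOn (fun x => (s x) ^ 2 * h x) (Set.Icc a b) := by
    refine Integrable.mono ((hint.integrableOn).const_mul (C ^ 2)) hmeas ?_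
    filter_upwards [ae_restrict_mem measurableSet_Icc] with x hx
    rw [Real.norm_eq_abs, Real.norm_eq_abs,
      abs_of_nonneg (mul_nonneg (sq_nonneg _) (hpos x)),
      abs_of_nonneg (mul_nonneg (sq_nonneg C) (hpos x))]
    exact mul_le_mul_of_nonneg_right (hbound x hx) (hpos x)
  have hIntL : IntervalIntegrable (fun x => (s x) ^ 2 * h x) volume a m := by
    rw [intervalIntegrable_iff_integrableOn_Icc_of_le ham]
    exact hIntObj.mono_set (Set.Icc_subset_Icc le_rfl hmb)
  have hIntR : IntervalIntegrable (fun x => (s x) ^ 2 * h x) volume m b := by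
    rw [intervalIntegrable_iff_integrableOn_Icc_of_le hmb]
    exact hIntObj.mono_set (Set.Icc_subset_Icc ham le_rfl)
  have hhIL : IntervalIntegrable (fun x => (s m) ^ 2 * h x) volume a m := by
    rw [intervalIntegrable_iff_integrableOn_Icc_of_le ham]
    exact (hint.const_mul _).integrableOn
  have hhIR : IntervalIntegrable (fun x => (s m) ^ 2 * h x) volume m b := by
    rw [intervalIntegrable_iff_integrableOn_Icc_of_le hmb]
    exact (hint.const_mul _).integrableOn
  -- splitting
  have hsplit : (∫ x in a..b, (s x) ^ 2 * h x) =
      (∫ x in a..m, (s x) ^ 2 * h x) + ∫ x in m..b, (s x) ^ 2 * h x :=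
    (intervalIntegral.integral_add_adjacent_intervals hIntL hIntR).symm
  have hintam : (∫ x in a..m, h x) = q - q / 2 := by
    rw [← intervalIntegral.integral_Iic_sub_Iic hint.integrableOn hint.integrableOn]
    show H m - H a = q - q / 2
    rw [Hm, Ha]
  have hintmb : (∫ x in m..b, h x) = 1 - q / 2 - q := by
    rw [← intervalIntegral.integral_Iic_sub_Iic hint.integrableOn hint.integrableOn]
    show H b - H m = 1 - q / 2 - q
    rw [Hb, Hm]
  have hnnL : (0:ℝ) ≤ ∫ x in a..m, (s x) ^ 2 * h x :=
    intervalIntegral.integral_nonneg ham fun x _ => mul_nonneg (sq_nonneg _) (hpos x)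
  have hnnR : (0:ℝ) ≤ ∫ x in m..b, (s x) ^ 2 * h x :=
    intervalIntegral.integral_nonneg hmb fun x _ => mul_nonneg (sq_nonneg _) (hpos x)
  -- key lower bound on the integral
  have hkey : (s m) ^ 2 * (q / 2) ≤ ∫ x in a..b, (s x) ^ 2 * h x := by
    rcases le_or_gt 0 (s m) with hsm | hsm
    · -- use the left part [a, m]
      have hptw : ∀ x ∈ Set.Icc a m, (s m) ^ 2 * h x ≤ (s x) ^ 2 * h x := by
        intro x hx
        have hxab : x ∈ Set.Icc a b := ⟨hx.1, hx.2.trans hmb⟩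
        have hmab : m ∈ Set.Icc a b := ⟨ham, hmb⟩
        have hle : s m ≤ s x := hant hxab hmab hx.2
        exact mul_le_mul_of_nonneg_right (by nlinarith) (hpos x)
      have h1 : (∫ x in a..m, (s m) ^ 2 * h x) ≤ ∫ x in a..m, (s x) ^ 2 * h x :=
        intervalIntegral.integral_mono_on ham hhIL hIntL hptw
      have h2 : (∫ x in a..m, (s m) ^ 2 * h x) = (s m) ^ 2 * (q / 2) := by
        rw [intervalIntegral.integral_const_mul, hintam]; ring
      rw [hsplit]; linarith
    · -- use the right part [m, b]
      have hptw : ∀ x ∈ Set.Icc m b, (s m) ^ 2 * h x ≤ (s x) ^ 2 * h x := by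
        intro x hx
        have hxab : x ∈ Set.Icc a b := ⟨ham.trans hx.1, hx.2⟩
        have hmab : m ∈ Set.Icc a b := ⟨ham, hmb⟩
        have hle : s x ≤ s m := hant hmab hxab hx.1
        exact mul_le_mul_of_nonneg_right (by nlinarith) (hpos x)
      have h1 : (∫ x in m..b, (s m) ^ 2 * h x) ≤ ∫ x in m..b, (s x) ^ 2 * h x :=
        intervalIntegral.integral_mono_on hmb hhIR hIntR hptw
      have h2 : (∫ x in m..b, (s m) ^ 2 * h x) = (s m) ^ 2 * (1 - q / 2 - q) := by
        rw [intervalIntegral.integral_const_mul, hintmb]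
      have h3 : (s m) ^ 2 * (q / 2) ≤ (s m) ^ 2 * (1 - q / 2 - q) :=
        mul_le_mul_of_nonneg_left (by linarith) (sq_nonneg _)
      rw [hsplit]; linarith
  -- conclude
  have hqq : (2 / q) * (q / 2) = 1 := by field_simp
  calc (s m) ^ 2 = (2 / q) * ((s m) ^ 2 * (q / 2)) := by
        rw [mul_comm ((s m) ^ 2) (q / 2), ← mul_assoc, hqq, one_mul]
    _ ≤ (2 / q) * ∫ x in a..b, (s x) ^ 2 * h x :=
        mul_le_mul_of_nonneg_left hkey (by positivity)
end
end
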